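/- Let (Λ_0, ..., Λ_l) be a Δ-admissible tuple of Laurent polynomials over ℤ_p. Then for 0 ≤ s ≤ l the Hasse–Witt matrix decomposes as A(s+1, W_s) = Σ_{j=1}^{s} A(j, V_{j-1}) · σ^j(A(s-j+1, W_s^(j))) + A(s+1, V_s), where σ is the substitution z ↦ z^p applied entrywise. -/

import Mathlib

open AddMonoidAlgebra Pointwise

/-- Laurent polynomials in two groups of variables `t = (t_1,…,t_r)`, `z = (z_1,…,z_nz)`
over `R`: the monoid algebra on the group of pairs of exponent vectors. -/
abbrev LaurentTZ (R : Type*) [CommRing R] (r nz : ℕ) : Type _ :=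
  AddMonoidAlgebra R ((Fin r →₀ ℤ) × (Fin nz →₀ ℤ))

/-- Laurent polynomials in the variables `z` only. -/
abbrev LaurentZ (R : Type*) [CommRing R] (nz : ℕ) : Type _ :=
  AddMonoidAlgebra R (Fin nz →₀ ℤ)

/-- The substitution `(t,z) ↦ (t^q, z^q)` on Laurent polynomials in `t, z`. -/
noncomputable def frobTZ (R : Type*) [CommRing R] (r nz : ℕ) (q : ℕ) :
    LaurentTZ R r nz →+* LaurentTZ R r nz :=
  AddMonoidAlgebra.mapDomainRingHom R
    (DistribMulAction.toAddMonoidHom ((Fin r →₀ ℤ) × (Fin nz →₀ ℤ)) (q : ℤ))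

/-- The substitution `z ↦ z^q` on Laurent polynomials in `z`. -/
noncomputable def frobZ (R : Type*) [CommRing R] (nz : ℕ) (q : ℕ) :
    LaurentZ R nz →+* LaurentZ R nz :=
  AddMonoidAlgebra.mapDomainRingHom R
    (DistribMulAction.toAddMonoidHom (Fin nz →₀ ℤ) (q : ℤ))

/-- `Cf_w F`: the coefficient of `t^w` in `F(t,z)`, a Laurent polynomial in `z`. -/
noncomputable def CfT {R : Type*} [CommRing R] {r nz : ℕ}
    (w : Fin r →₀ ℤ) (F : LaurentTZ R r nz) : LaurentZ R nz :=
  AddMonoidAlgebra.ofCoeff (Finsupp.curry F.coeff w)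

/-- The Hasse–Witt matrix of level `m` of `F(t,z)` attached to the finite set
`Δ ⊂ ℤ^r`: the `Δ × Δ` matrix with `(u,v)` entry `Cf_{p^m v - u} F`. -/
noncomputable def HW {R : Type*} [CommRing R] {r nz : ℕ} (p : ℕ)
    (Δ : Finset (Fin r →₀ ℤ)) (m : ℕ) (F : LaurentTZ R r nz) :
    Matrix Δ Δ (LaurentZ R nz) :=
  fun u v => CfT (((p : ℤ) ^ m) • (v : Fin r →₀ ℤ) - (u : Fin r →₀ ℤ)) F

/-- `Wseg p Λ j s = Λ_j · Λ_{j+1}^p ··· Λ_s^(p^(s-j))` (for `j ≤ s`). -/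
noncomputable def Wseg {R : Type*} [CommRing R] {r nz : ℕ} (p : ℕ)
    (Λ : ℕ → LaurentTZ R r nz) (j s : ℕ) : LaurentTZ R r nz :=
  ∏ i ∈ Finset.range (s - j + 1), Λ (j + i) ^ p ^ i

/-- The embedding `ℤ^r → ℝ^r`. -/
noncomputable def latticeEmb (r : ℕ) : (Fin r →₀ ℤ) → (Fin r → ℝ) :=
  fun v i => (v i : ℝ)

/-- The Newton polytope of `F(t,z)` with respect to the `t`-variables only. -/
noncomputable def newtonT {R : Type*} [CommRing R] {r nz : ℕ}
    (F : LaurentTZ R r nz) : Set (Fin r → ℝ) :=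
  convexHull ℝ ((fun e : (Fin r →₀ ℤ) × (Fin nz →₀ ℤ) => latticeEmb r e.1) '' ↑F.coeff.support)

/-- `Δ`-admissibility of the tuple `(Λ_0, …, Λ_{l})`: for all `0 ≤ i ≤ j < l`,
`(Δ + N(Λ_i) + p·N(Λ_{i+1}) + ⋯ + p^{j-i}·N(Λ_j)) ∩ p^{j-i+1}ℤ^r ⊆ p^{j-i+1}Δ`,
where `N(·)` is the Newton polytope in the `t`-variables. -/
def IsAdmissible {R : Type*} [CommRing R] {r nz : ℕ} (p : ℕ)
    (Δ : Finset (Fin r →₀ ℤ)) (l : ℕ) (Λ : ℕ → LaurentTZ R r nz) : Prop :=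
  ∀ i j : ℕ, i ≤ j → j < l →
    (latticeEmb r '' ↑Δ +
        ∑ k ∈ Finset.range (j - i + 1), ((p : ℝ) ^ k) • newtonT (Λ (i + k))) ∩
      (((p : ℝ) ^ (j - i + 1)) • Set.range (latticeEmb r)) ⊆
    ((p : ℝ) ^ (j - i + 1)) • (latticeEmb r '' ↑Δ)

/-!
Substituting the recursion for `V_s` gives `W_s = Σ_j V_{j-1} · σ^j(W_s^{(j)}) + V_s`, and
`A(s+1, ·)` is additive, so it suffices to factor `A(j+m, F · σ^j G)` for `F = V_{j-1}`.
Its `(u, v)` entry collects the monomials `t^a` of `F` and `t^{p^j b}` of `σ^j G` with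
`a + p^j b = p^{j+m} v - u`; writing `a = p^j w - u` turns it into
`Σ_w Cf_{p^j w - u} F · σ^j Cf_{p^m v - w} G`, the `(u, v)` entry of `A(j, F) · σ^j A(m, G)`,
as soon as every such `w` lies in `Δ`. The `t`-exponents of `V_{j-1}` lie in
`N(Λ_0) + p·N(Λ_1) + ⋯ + p^{j-1}·N(Λ_{j-1})` (induction along the recursion), and for those
exponents admissibility with `i = 0` says precisely that `w ∈ Δ`.
-/

section HasseWitt

variable {R : Type*} [CommRing R] {r nz : ℕ}

lemma CfT_coeff (w : Fin r →₀ ℤ) (F : LaurentTZ R r nz) (ζ : Fin nz →₀ ℤ) :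
    (CfT w F).coeff ζ = F.coeff (w, ζ) := rfl

lemma CfT_single (w : Fin r →₀ ℤ) (e : (Fin r →₀ ℤ) × (Fin nz →₀ ℤ)) (c : R) :
    CfT w (single e c) = if w = e.1 then single e.2 c else 0 := by
  ext ζ
  split_ifs with h
  · subst h
    simp [CfT_coeff, AddMonoidAlgebra.coeff_single, Finsupp.single_apply, Prod.ext_iff, eq_comm]
  · simp [CfT_coeff, AddMonoidAlgebra.coeff_single, Prod.ext_iff, Ne.symm h]

lemma frobTZ_single (q : ℕ) (e : (Fin r →₀ ℤ) × (Fin nz →₀ ℤ)) (c : R) :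
    frobTZ R r nz q (single e c) = single ((q : ℤ) • e) c := by
  simp [frobTZ]

lemma frobZ_single (q : ℕ) (b : Fin nz →₀ ℤ) (c : R) :
    frobZ R nz q (single b c) = single ((q : ℤ) • b) c := by
  simp [frobZ]

variable (p : ℕ) (Δ : Finset (Fin r →₀ ℤ))

noncomputable def HW.addMonoidHom (m : ℕ) :
    LaurentTZ R r nz →+ Matrix Δ Δ (LaurentZ R nz) where
  toFun := HW p Δ m
  map_zero' := by ext; simp [HW, CfT_coeff]
  map_add' _ _ := by ext; simp [HW, CfT_coeff]

lemma HW_zero (m : ℕ) : HW p Δ m (0 : LaurentTZ R r nz) = 0 :=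
  map_zero (HW.addMonoidHom p Δ m)

lemma HW_add (m : ℕ) (F G : LaurentTZ R r nz) :
    HW p Δ m (F + G) = HW p Δ m F + HW p Δ m G :=
  map_add (HW.addMonoidHom p Δ m) F G

lemma HW_sum (m : ℕ) {ι : Type*} (I : Finset ι) (F : ι → LaurentTZ R r nz) :
    HW p Δ m (∑ i ∈ I, F i) = ∑ i ∈ I, HW p Δ m (F i) :=
  map_sum (HW.addMonoidHom p Δ m) F I

lemma HW_single_apply (m : ℕ) (e : (Fin r →₀ ℤ) × (Fin nz →₀ ℤ)) (c : R) (u v : Δ) :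
    HW p Δ m (single e c) u v =
      if ((p : ℤ) ^ m) • (v : Fin r →₀ ℤ) - u = e.1 then single e.2 c else 0 :=
  CfT_single _ _ _

/-- Only `w₀ = p^m v - f.1` can contribute to the `(u, v)` entry of the product, and `he`
puts it in `Δ` whenever it contributes to the left-hand side. -/
lemma HW_single_mul_frobTZ_single (j m : ℕ) (e f : (Fin r →₀ ℤ) × (Fin nz →₀ ℤ)) (c d : R)
    (he : ∀ u ∈ Δ, ∀ w : Fin r →₀ ℤ, ((p : ℤ) ^ j) • w = e.1 + u → w ∈ Δ) :
    HW p Δ (j + m) (single e c * frobTZ R r nz (p ^ j) (single f d)) =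
      HW p Δ j (single e c) * (HW p Δ m (single f d)).map (frobZ R nz (p ^ j)) := by
  refine Matrix.ext fun u v => ?_
  obtain ⟨w₀, hw₀⟩ : ∃ w₀, ((p : ℤ) ^ m) • (v : Fin r →₀ ℤ) = w₀ + f.1 :=
    ⟨_, (sub_add_cancel _ _).symm⟩
  have hlhs : ((p : ℤ) ^ (j + m)) • (v : Fin r →₀ ℤ) - u = e.1 + ((p : ℤ) ^ j) • f.1 ↔
      ((p : ℤ) ^ j) • w₀ = e.1 + u := by
    rw [pow_add, mul_smul, hw₀, smul_add, sub_eq_iff_eq_add, add_right_comm, add_left_inj]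
  have hrhs : ∀ w : Fin r →₀ ℤ,
      (((p : ℤ) ^ j) • w - u = e.1 ∧ ((p : ℤ) ^ m) • (v : Fin r →₀ ℤ) - w = f.1) ↔
        (w = w₀ ∧ ((p : ℤ) ^ j) • w₀ = e.1 + u) := by
    intro w
    have hw : ((p : ℤ) ^ m) • (v : Fin r →₀ ℤ) - w = f.1 ↔ w = w₀ := by
      rw [hw₀, ← sub_add_eq_add_sub, add_eq_right, sub_eq_zero, eq_comm]
    rw [sub_eq_iff_eq_add, hw, and_comm]
    exact and_congr_right fun hw => hw ▸ Iff.rfl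
  simp only [Matrix.mul_apply, Matrix.map_apply, HW_single_apply, apply_ite (frobZ R nz (p ^ j)),
    map_zero, frobZ_single, ite_zero_mul_ite_zero, single_mul_single, hrhs, frobTZ_single,
    Nat.cast_pow, Prod.fst_add, Prod.snd_add, Prod.smul_fst, Prod.smul_snd, hlhs]
  by_cases h : ((p : ℤ) ^ j) • w₀ = e.1 + u
  · rw [Fintype.sum_eq_single ⟨w₀, he u u.2 w₀ h⟩
      fun w hw => if_neg fun hw' => hw (Subtype.ext hw'.1)]
    simp [h]
  · simp [h]

lemma HW_mul_frobTZ (j m : ℕ) (F G : LaurentTZ R r nz)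
    (hF : ∀ e ∈ F.coeff.support, ∀ u ∈ Δ, ∀ w : Fin r →₀ ℤ,
      ((p : ℤ) ^ j) • w = e.1 + u → w ∈ Δ) :
    HW p Δ (j + m) (F * frobTZ R r nz (p ^ j) G) =
      HW p Δ j F * (HW p Δ m G).map (frobZ R nz (p ^ j)) := by
  induction G using AddMonoidAlgebra.induction_linear with
  | zero => simp [HW_zero]
  | add G₁ G₂ h₁ h₂ => simp [mul_add, HW_add, h₁, h₂, Matrix.map_add]
  | single f d =>
    rw [← F.sum_coeff_single]
    simp only [Finsupp.sum, Finset.sum_mul, HW_sum]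
    exact Finset.sum_congr rfl fun e he => HW_single_mul_frobTZ_single p Δ j m e f _ d (hF e he)

end HasseWitt

section Exponents

variable {R : Type*} [CommRing R] {r nz : ℕ}

lemma latticeEmb_zero : latticeEmb r 0 = 0 := by
  ext i; simp [latticeEmb]

lemma latticeEmb_add (a b : Fin r →₀ ℤ) :
    latticeEmb r (a + b) = latticeEmb r a + latticeEmb r b := by
  ext i; simp [latticeEmb]

lemma latticeEmb_zsmul (n : ℤ) (a : Fin r →₀ ℤ) :
    latticeEmb r (n • a) = (n : ℝ) • latticeEmb r a := by
  ext i; simp [latticeEmb]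

lemma latticeEmb_injective : Function.Injective (latticeEmb r) := fun a b h =>
  Finsupp.ext fun i => by simpa [latticeEmb] using congrFun h i

def tExponents (F : LaurentTZ R r nz) : Set (Fin r → ℝ) :=
  (fun e : (Fin r →₀ ℤ) × (Fin nz →₀ ℤ) => latticeEmb r e.1) '' ↑F.coeff.support

lemma tExponents_subset_newtonT (F : LaurentTZ R r nz) : tExponents F ⊆ newtonT F :=
  subset_convexHull ℝ _

lemma tExponents_one_subset : tExponents (1 : LaurentTZ R r nz) ⊆ 0 := by
  classical
  rintro _ ⟨e, he, rfl⟩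
  obtain rfl : e = 0 := Finset.mem_zero.mp (support_coeff_one_subset he)
  simp [latticeEmb_zero]

lemma tExponents_mul_subset (F G : LaurentTZ R r nz) :
    tExponents (F * G) ⊆ tExponents F + tExponents G := by
  classical
  rintro _ ⟨e, he, rfl⟩
  obtain ⟨a, ha, b, hb, rfl⟩ := Finset.mem_add.mp (support_coeff_mul_subset F G he)
  show latticeEmb r (a + b).1 ∈ _
  rw [Prod.fst_add, latticeEmb_add]
  exact Set.add_mem_add ⟨a, ha, rfl⟩ ⟨b, hb, rfl⟩

lemma tExponents_sub_subset {K : Set (Fin r → ℝ)} {F G : LaurentTZ R r nz}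
    (hF : tExponents F ⊆ K) (hG : tExponents G ⊆ K) : tExponents (F - G) ⊆ K := by
  classical
  rintro _ ⟨e, he, rfl⟩
  rcases Finset.mem_union.mp (Finsupp.support_sub he) with he | he
  exacts [hF ⟨e, he, rfl⟩, hG ⟨e, he, rfl⟩]

lemma tExponents_sum_subset {ι : Type*} {K : Set (Fin r → ℝ)} {I : Finset ι}
    {F : ι → LaurentTZ R r nz} (hF : ∀ i ∈ I, tExponents (F i) ⊆ K) :
    tExponents (∑ i ∈ I, F i) ⊆ K := by
  classical
  rintro _ ⟨e, he, rfl⟩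
  rw [Finset.mem_coe, coeff_sum] at he
  obtain ⟨i, hi, he⟩ := Finset.mem_biUnion.mp (Finsupp.support_finsetSum he)
  exact hF i hi ⟨e, he, rfl⟩

lemma tExponents_frobTZ_subset (q : ℕ) (F : LaurentTZ R r nz) :
    tExponents (frobTZ R r nz q F) ⊆ (q : ℝ) • tExponents F := by
  classical
  rintro _ ⟨e', he', rfl⟩
  obtain ⟨e, he, rfl⟩ := Finset.mem_image.mp (Finsupp.mapDomain_support he')
  refine ⟨_, ⟨e, he, rfl⟩, ?_⟩
  show (q : ℝ) • latticeEmb r e.1 = latticeEmb r ((q : ℤ) • e).1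
  rw [Prod.smul_fst, latticeEmb_zsmul, Int.cast_natCast]

lemma tExponents_pow_subset (F : LaurentTZ R r nz) {n : ℕ} (hn : n ≠ 0) :
    tExponents (F ^ n) ⊆ (n : ℝ) • newtonT F := by
  induction n with
  | zero => exact absurd rfl hn
  | succ n ih =>
    rcases eq_or_ne n 0 with rfl | hn'
    · simpa using tExponents_subset_newtonT F
    have hconv : Convex ℝ (newtonT F) := convex_convexHull ℝ _
    rw [pow_succ, Nat.cast_succ, hconv.add_smul n.cast_nonneg zero_le_one, one_smul]
    exact (tExponents_mul_subset _ _).trans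
      (Set.add_subset_add (ih hn') (tExponents_subset_newtonT F))

lemma tExponents_prod_pow_subset {ι : Type*} (I : Finset ι) (F : ι → LaurentTZ R r nz)
    (n : ι → ℕ) (hn : ∀ i ∈ I, n i ≠ 0) :
    tExponents (∏ i ∈ I, F i ^ n i) ⊆ ∑ i ∈ I, (n i : ℝ) • newtonT (F i) := by
  classical
  induction I using Finset.induction with
  | empty => simpa using tExponents_one_subset
  | insert a I ha ih =>
    rw [Finset.prod_insert ha, Finset.sum_insert ha]
    refine (tExponents_mul_subset _ _).trans (Set.add_subset_add ?_ ?_)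
    · exact tExponents_pow_subset _ (hn a (Finset.mem_insert_self a I))
    · exact ih fun i hi => hn i (Finset.mem_insert_of_mem hi)

lemma tExponents_Wseg_subset {p : ℕ} (hp : p ≠ 0) (Λ : ℕ → LaurentTZ R r nz) (j s : ℕ) :
    tExponents (Wseg p Λ j s) ⊆
      ∑ k ∈ Finset.range (s - j + 1), ((p : ℝ) ^ k) • newtonT (Λ (j + k)) := by
  simpa [Wseg] using tExponents_prod_pow_subset _ (fun k => Λ (j + k)) (fun k => p ^ k)
    fun k _ => pow_ne_zero k hp

lemma tExponents_ghost_subset {p : ℕ} (hp : p ≠ 0) (l : ℕ) (Λ V : ℕ → LaurentTZ R r nz)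
    (hV : ∀ s ≤ l, V s =
      Wseg p Λ 0 s - ∑ j ∈ Finset.Icc 1 s, V (j - 1) * frobTZ R r nz (p ^ j) (Wseg p Λ j s))
    (s : ℕ) (hs : s ≤ l) :
    tExponents (V s) ⊆ ∑ k ∈ Finset.range (s + 1), ((p : ℝ) ^ k) • newtonT (Λ k) := by
  induction s using Nat.strong_induction_on with
  | _ s ih =>
    rw [hV s hs]
    refine tExponents_sub_subset (by simpa using tExponents_Wseg_subset hp Λ 0 s)
      (tExponents_sum_subset fun j hj => ?_)
    obtain ⟨hj, hjs⟩ := Finset.mem_Icc.mp hj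
    obtain ⟨i, rfl⟩ : ∃ i, j = i + 1 := ⟨j - 1, by omega⟩
    have hsplit : ∑ k ∈ Finset.range (s + 1), ((p : ℝ) ^ k) • newtonT (Λ k) =
        ∑ k ∈ Finset.range (i + 1), ((p : ℝ) ^ k) • newtonT (Λ k) +
          ((p ^ (i + 1) : ℕ) : ℝ) • ∑ k ∈ Finset.range (s - (i + 1) + 1),
            ((p : ℝ) ^ k) • newtonT (Λ (i + 1 + k)) := by
      rw [show s + 1 = (i + 1) + (s - (i + 1) + 1) by omega, Finset.sum_range_add, Finset.smul_sum]
      simp_rw [smul_smul, Nat.cast_pow, ← pow_add]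
    rw [hsplit]
    refine (tExponents_mul_subset _ _).trans (Set.add_subset_add ?_ ?_)
    · exact ih i (by omega) (by omega)
    · exact (tExponents_frobTZ_subset _ _).trans
        (Set.smul_set_mono (tExponents_Wseg_subset hp Λ _ s))

lemma HW_mul_frobTZ_of_tExponents_subset {p : ℕ} (hp : p ≠ 0) (Δ : Finset (Fin r →₀ ℤ))
    (j m : ℕ) {K : Set (Fin r → ℝ)}
    (hK : (latticeEmb r '' ↑Δ + K) ∩ (((p : ℝ) ^ j) • Set.range (latticeEmb r)) ⊆
      ((p : ℝ) ^ j) • (latticeEmb r '' ↑Δ))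
    (F G : LaurentTZ R r nz) (hF : tExponents F ⊆ K) :
    HW p Δ (j + m) (F * frobTZ R r nz (p ^ j) G) =
      HW p Δ j F * (HW p Δ m G).map (frobZ R nz (p ^ j)) := by
  refine HW_mul_frobTZ p Δ j m F G fun e he u hu w hw => ?_
  have hpj : ((p : ℝ) ^ j) ≠ 0 := pow_ne_zero j (Nat.cast_ne_zero.mpr hp)
  have hpt : ((p : ℝ) ^ j) • latticeEmb r w = latticeEmb r u + latticeEmb r e.1 := by
    rw [← latticeEmb_add, add_comm, ← hw, latticeEmb_zsmul]
    push_cast; rfl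
  have hmem := hK ⟨hpt ▸ Set.add_mem_add ⟨u, hu, rfl⟩ (hF ⟨e, he, rfl⟩),
    Set.smul_mem_smul_set ⟨w, rfl⟩⟩
  rwa [Set.smul_mem_smul_set_iff₀ hpj, latticeEmb_injective.mem_set_image] at hmem

end Exponents

theorem hasseWitt_decomposition_general (p : ℕ) [Fact p.Prime]
    (r nz : ℕ) (Δ : Finset (Fin r →₀ ℤ)) (l : ℕ)
    (Λ V : ℕ → LaurentTZ ℤ_[p] r nz)
    (hadm : IsAdmissible p Δ l Λ)
    (hV : ∀ s ≤ l, V s =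
      Wseg p Λ 0 s -
        ∑ j ∈ Finset.Icc 1 s,
          V (j - 1) * frobTZ ℤ_[p] r nz (p ^ j) (Wseg p Λ j s)) :
    ∀ s ≤ l,
      HW p Δ (s + 1) (Wseg p Λ 0 s) =
        (∑ j ∈ Finset.Icc 1 s,
          HW p Δ j (V (j - 1)) *
            (HW p Δ (s - j + 1) (Wseg p Λ j s)).map (frobZ ℤ_[p] nz (p ^ j))) +
        HW p Δ (s + 1) (V s) := by
  intro s hs
  have hp : p ≠ 0 := (Fact.out : p.Prime).ne_zero
  rw [← eq_sub_iff_add_eq'.mp (hV s hs), HW_add, HW_sum]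
  congr 1
  refine Finset.sum_congr rfl fun j hj => ?_
  obtain ⟨hj1, hjs⟩ := Finset.mem_Icc.mp hj
  obtain ⟨i, rfl⟩ : ∃ i, j = i + 1 := ⟨j - 1, by omega⟩
  have hK := hadm 0 i i.zero_le (by omega)
  simp only [Nat.sub_zero, zero_add] at hK
  rw [show s + 1 = i + 1 + (s - (i + 1) + 1) by omega]
  exact HW_mul_frobTZ_of_tExponents_subset hp Δ _ _ hK _ _
    (tExponents_ghost_subset hp l Λ V hV i (by omega))

/-- for a `Δ`-admissible tuple `(Λ_0,…,Λ_l)` over `ℤ_p` and the ghosts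
`V_s`, the Hasse–Witt matrix decomposes as
`A(s+1, W_s) = Σ_{j=1}^s A(j, V_{j-1}) · σ^j(A(s-j+1, W_s^{(j)})) + A(s+1, V_s)`,
where `σ^j` is the entrywise substitution `z ↦ z^{p^j}`. -/
theorem hasseWitt_decomposition (p : ℕ) (hp : p.Prime) [Fact p.Prime]
    (r nz : ℕ) (Δ : Finset (Fin r →₀ ℤ)) (l : ℕ)
    (Λ V : ℕ → LaurentTZ ℤ_[p] r nz)
    (hadm : IsAdmissible p Δ l Λ)
    (hV : ∀ s ≤ l, V s =
      Wseg p Λ 0 s -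
        ∑ j ∈ Finset.Icc 1 s,
          V (j - 1) * frobTZ ℤ_[p] r nz (p ^ j) (Wseg p Λ j s)) :
    ∀ s ≤ l,
      HW p Δ (s + 1) (Wseg p Λ 0 s) =
        (∑ j ∈ Finset.Icc 1 s,
          HW p Δ j (V (j - 1)) *
            (HW p Δ (s - j + 1) (Wseg p Λ j s)).map (frobZ ℤ_[p] nz (p ^ j))) +
        HW p Δ (s + 1) (V s) :=
  hasseWitt_decomposition_general p r nz Δ l Λ V hadm hV
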